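/- For every real x > 2, the Stieltjes (Cauchy) transform of the semicircle law satisfies G_σ(x) := ∫ 1/(x−t) dσ(t) = (x − √(x²−4))/2, i.e. ∫_{−2}^{2} (x−t)^{−1} · √(4−t²)/(2π) dt = (x − √(x²−4))/2. -/

import Mathlib

/-! Off `[-2,2]` the density of `σ` is `√(4-t²)/(2π) = 0` (the square root of a negative real
is `0`), so both integrals equal `(2π)⁻¹ ∫_{-2}^{2} √(4-t²)/(x-t) dt`. For `x > 2` the integrand
has an elementary primitive on `(-2,2)`, continuous on `[-2,2]`, whose increment over the
interval is `π(x - √(x²-4))` by the fundamental theorem of calculus. -/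

open MeasureTheory

noncomputable section

/-- The semicircle law: density `√(4-t²)/(2π)` on `[-2,2]`. -/
def semicircle : Measure ℝ :=
  volume.withDensity fun t => ENNReal.ofReal (Real.sqrt (4 - t ^ 2) / (2 * Real.pi))

open Real Set

lemma sqrt_four_sub_sq_eq_zero_of_notMem_Icc {t : ℝ} (ht : t ∉ Icc (-2 : ℝ) 2) :
    √(4 - t ^ 2) = 0 := by
  rw [sqrt_eq_zero']
  rw [mem_Icc, not_and_or, not_le, not_le] at ht
  rcases ht with h | h <;> nlinarith

theorem integral_semicircle {E : Type*} [NormedAddCommGroup E] [NormedSpace ℝ E] (f : ℝ → E) :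
    ∫ t, f t ∂semicircle = ∫ t in (-2 : ℝ)..2, (√(4 - t ^ 2) / (2 * π)) • f t := by
  have hdensity_nonneg (t : ℝ) : 0 ≤ √(4 - t ^ 2) / (2 * π) := by positivity
  rw [semicircle, integral_withDensity_eq_integral_toReal_smul (by fun_prop)
    (Filter.Eventually.of_forall fun _ => ENNReal.ofReal_lt_top)]
  simp only [ENNReal.toReal_ofReal (hdensity_nonneg _)]
  rw [intervalIntegral.integral_of_le (by norm_num), ← integral_Icc_eq_integral_Ioc,
    setIntegral_eq_integral_of_forall_compl_eq_zero]
  intro t ht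
  rw [sqrt_four_sub_sq_eq_zero_of_notMem_Icc ht, zero_div, zero_smul]

lemma HasDerivAt.arcsin {f : ℝ → ℝ} {f' x : ℝ} (hf : HasDerivAt f f' x) (h₁ : f x ≠ -1)
    (h₂ : f x ≠ 1) : HasDerivAt (fun y => arcsin (f y)) (f' / √(1 - f x ^ 2)) x :=
  ((hasDerivAt_arcsin h₁ h₂).comp x hf).congr_deriv (by ring)

lemma hasDerivAt_arcsin_half {t : ℝ} (ht : t ∈ Ioo (-2 : ℝ) 2) :
    HasDerivAt (fun t => arcsin (t / 2)) (√(4 - t ^ 2))⁻¹ t := by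
  obtain ⟨ht₁, ht₂⟩ := ht
  have hsqrt : √(1 - (t / 2) ^ 2) = √(4 - t ^ 2) / 2 := by
    rw [show 1 - (t / 2) ^ 2 = (4 - t ^ 2) / 2 ^ 2 by ring, sqrt_div' _ (by norm_num),
      sqrt_sq (by norm_num)]
  refine (((hasDerivAt_id' t).div_const 2).arcsin (by linarith) (by linarith)).congr_deriv ?_
  rw [hsqrt]
  field_simp

lemma hasDerivAt_sqrt_four_sub_sq {t : ℝ} (ht : t ∈ Ioo (-2 : ℝ) 2) :
    HasDerivAt (fun t => √(4 - t ^ 2)) (-t / √(4 - t ^ 2)) t := by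
  obtain ⟨ht₁, ht₂⟩ := ht
  refine (((hasDerivAt_pow 2 t).const_sub 4).sqrt (by nlinarith)).congr_deriv ?_
  field_simp
  ring

lemma hasDerivAt_arcsin_four_sub_mul_div {x t : ℝ} (hx : 2 < x) (ht : t ∈ Ioo (-2 : ℝ) 2) :
    HasDerivAt (fun t => arcsin ((4 - x * t) / (2 * (x - t))))
      (-√(x ^ 2 - 4) / ((x - t) * √(4 - t ^ 2))) t := by
  obtain ⟨ht₁, ht₂⟩ := ht
  have hxt : 0 < x - t := by linarith
  have hr := sq_sqrt (by nlinarith : 0 ≤ x ^ 2 - 4)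
  have hs := sq_sqrt (by nlinarith : 0 ≤ 4 - t ^ 2)
  have hr_pos : 0 < √(x ^ 2 - 4) := sqrt_pos.2 (by nlinarith)
  have hs_pos : 0 < √(4 - t ^ 2) := sqrt_pos.2 (by nlinarith)
  have hsqrt : √(1 - ((4 - x * t) / (2 * (x - t))) ^ 2)
      = √(x ^ 2 - 4) * √(4 - t ^ 2) / (2 * (x - t)) := by
    rw [← sqrt_sq (by positivity : 0 ≤ √(x ^ 2 - 4) * √(4 - t ^ 2) / (2 * (x - t)))]
    congr 1
    field_simp
    rw [hr, hs]
    ring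
  have hu := (((hasDerivAt_id' t).const_mul x).const_sub 4).fun_div
    (((hasDerivAt_id' t).const_sub x).const_mul 2) (by positivity)
  refine (hu.arcsin ?_ ?_).congr_deriv ?_
  · rw [Ne, div_eq_iff (by positivity)]
    nlinarith
  · rw [Ne, div_eq_iff (by positivity)]
    nlinarith
  · rw [hsqrt]
    field_simp
    linear_combination hr

/- Splitting `√(4-t²)/(x-t) = (x+t)/√(4-t²) - (x²-4)/((x-t)√(4-t²))`, the first term
integrates to `x arcsin(t/2) - √(4-t²)`, and the second to the last arcsin term. -/
def semicircleStieltjesPrimitive (x t : ℝ) : ℝ :=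
  x * arcsin (t / 2) - √(4 - t ^ 2) + √(x ^ 2 - 4) * arcsin ((4 - x * t) / (2 * (x - t)))

lemma hasDerivAt_semicircleStieltjesPrimitive {x t : ℝ} (hx : 2 < x)
    (ht : t ∈ Ioo (-2 : ℝ) 2) :
    HasDerivAt (semicircleStieltjesPrimitive x) (√(4 - t ^ 2) / (x - t)) t := by
  have hxt : x - t ≠ 0 := by linarith [ht.2]
  have hs : 0 < √(4 - t ^ 2) := sqrt_pos.2 (by nlinarith [ht.1, ht.2])
  refine ((((hasDerivAt_arcsin_half ht).const_mul x).sub (hasDerivAt_sqrt_four_sub_sq ht)).add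
    ((hasDerivAt_arcsin_four_sub_mul_div hx ht).const_mul (√(x ^ 2 - 4)))).congr_deriv ?_
  field_simp
  rw [sq_sqrt (by nlinarith), sq_sqrt (by nlinarith [ht.1, ht.2])]
  ring

lemma continuousOn_semicircleStieltjesPrimitive {x : ℝ} (hx : 2 < x) :
    ContinuousOn (semicircleStieltjesPrimitive x) (Icc (-2) 2) := by
  have hxt : ∀ t ∈ Icc (-2 : ℝ) 2, 2 * (x - t) ≠ 0 := fun t ht => by linarith [ht.2]
  unfold semicircleStieltjesPrimitive
  fun_prop (disch := assumption)

theorem integral_sqrt_four_sub_sq_div_sub {x : ℝ} (hx : 2 < x) :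
    ∫ t in (-2 : ℝ)..2, √(4 - t ^ 2) / (x - t) = π * (x - √(x ^ 2 - 4)) := by
  have hxt : ∀ t ∈ Icc (-2 : ℝ) 2, x - t ≠ 0 := fun t ht => by linarith [ht.2]
  have hint : IntervalIntegrable (fun t => √(4 - t ^ 2) / (x - t)) volume (-2) 2 :=
    ContinuousOn.intervalIntegrable <| by
      rw [uIcc_of_le (by norm_num)]
      fun_prop (disch := assumption)
  rw [intervalIntegral.integral_eq_sub_of_hasDerivAt_of_le (by norm_num)
    (continuousOn_semicircleStieltjesPrimitive hx)
    (fun t ht => hasDerivAt_semicircleStieltjesPrimitive hx ht) hint]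
  -- the Möbius argument of the last arcsin sends `±2` to `∓1`
  have hx₁ : (4 - x * 2) / (2 * (x - 2)) = -1 := by
    rw [div_eq_iff (by linarith)]; ring
  have hx₂ : (4 - x * -2) / (2 * (x - -2)) = 1 := by
    rw [div_eq_iff (by linarith)]; ring
  simp only [semicircleStieltjesPrimitive, hx₁, hx₂]
  norm_num
  ring

/-- For `x > 2`, the Stieltjes transform of the semicircle law is
`G_σ(x) = (x - √(x²-4))/2`. -/
theorem stieltjes_transform_semicircle (x : ℝ) (hx : 2 < x) :
    (∫ t, (x - t)⁻¹ ∂semicircle) = (x - Real.sqrt (x ^ 2 - 4)) / 2 ∧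
    (∫ t in (-2 : ℝ)..2, (x - t)⁻¹ * (Real.sqrt (4 - t ^ 2) / (2 * Real.pi)))
      = (x - Real.sqrt (x ^ 2 - 4)) / 2 := by
  have hinterval : (∫ t in (-2 : ℝ)..2, (x - t)⁻¹ * (√(4 - t ^ 2) / (2 * π)))
      = (x - √(x ^ 2 - 4)) / 2 := by
    have hintegrand (t : ℝ) : (x - t)⁻¹ * (√(4 - t ^ 2) / (2 * π))
        = √(4 - t ^ 2) / (x - t) / (2 * π) := by ring
    simp_rw [hintegrand]
    rw [intervalIntegral.integral_div, integral_sqrt_four_sub_sq_div_sub hx]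
    field_simp
  refine ⟨?_, hinterval⟩
  rw [integral_semicircle]
  simpa only [smul_eq_mul, mul_comm] using hinterval

end
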